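/- arXiv:2409.11328 — 2 statements merged into one kernel-verified Lean document; each statement's English description precedes it below -/
import Mathlib

section
/- For every connected graph G, the burning number satisfies b(G) ≤ b_g(G) ≤ min{CL(G), 2·b(G²) − 1}, where b_g is the Burner-start game burning number, CL is the cooling number, and G² is the square of G. -/
/-!
`EndBy` is monotone in the burned set and in the set of rounds in which Burner selects (a Burner
move onto a vertex that is already burned is replaced by one onto any unburned vertex). The
Burner-only and Staller-only games are the two extremes, which gives `b(G) ≤ b_g(G) ≤ CL(G)`.

For `b_g(G) ≤ 2 b(G²) - 1`, Burner replays an optimal burning sequence of `G²` in his own rounds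
of the game on `G`. Between two of his moves the fire on `G` spreads twice, hence at least as far
as it spreads once on `G²`, and Staller's moves only add fire. So the fire on `G` keeps covering
the fire on `G²`, and each of the `b(G²) - 1` rounds of `G²` after the first costs two rounds
on `G`.
-/

namespace BurningGame

/-- One spreading phase: all neighbors of burned vertices become burned. -/
noncomputable def spread {V : Type*} [Fintype V] [DecidableEq V] (G : SimpleGraph V) (B : Finset V) : Finset V :=
  ((↑B : Set V) ∪ {v | ∃ u ∈ B, G.Adj u v}).toFinite.toFinset

/-- `EndBy G turn i B k`: starting from burned set `B` at round index `i`
(the player selecting in round `i` is Burner iff `turn i = true`; Burner's selections are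
quantified existentially, Staller's universally), Burner can force the game to end
within `k` further rounds. -/
def EndBy {V : Type*} [Fintype V] [DecidableEq V] (G : SimpleGraph V) (turn : ℕ → Bool) :
    ℕ → Finset V → ℕ → Prop
  | _, B, 0 => B = Finset.univ
  | i, B, k + 1 => B = Finset.univ ∨
      spread G B = Finset.univ ∨
      (if turn i then ∃ v ∉ spread G B, EndBy G turn (i + 1) (insert v (spread G B)) k
       else ∀ v ∉ spread G B, EndBy G turn (i + 1) (insert v (spread G B)) k)

/-- Game burning number relative to a preburned set `S` (Burner starts). -/
noncomputable def bgRel {V : Type*} [Fintype V] [DecidableEq V] (G : SimpleGraph V) (S : Finset V) : ℕ :=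
  sInf {k | EndBy G (fun i => i % 2 == 0) 0 S k}

/-- The game burning number (Burner starts). -/
noncomputable def bg {V : Type*} [Fintype V] [DecidableEq V] (G : SimpleGraph V) : ℕ := bgRel G ∅

/-- The Staller-start game burning number. -/
noncomputable def bg' {V : Type*} [Fintype V] [DecidableEq V] (G : SimpleGraph V) : ℕ :=
  sInf {k | EndBy G (fun i => i % 2 == 1) 0 ∅ k}

/-- The burning number: only Burner plays. -/
noncomputable def burn {V : Type*} [Fintype V] [DecidableEq V] (G : SimpleGraph V) : ℕ :=
  sInf {k | EndBy G (fun _ => true) 0 ∅ k}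

/-- The cooling number: only Staller plays. -/
noncomputable def cool {V : Type*} [Fintype V] [DecidableEq V] (G : SimpleGraph V) : ℕ :=
  sInf {k | EndBy G (fun _ => false) 0 ∅ k}


/-- The square of a graph: vertices at distance at most 2 are adjacent. -/
def square {V : Type*} (G : SimpleGraph V) : SimpleGraph V where
  Adj u v := G.Adj u v ∨ (u ≠ v ∧ ∃ w, G.Adj u w ∧ G.Adj w v)
  symm := by
    constructor
    intro u v h
    rcases h with h | ⟨hne, w, h1, h2⟩
    · exact Or.inl h.symm
    · exact Or.inr ⟨hne.symm, w, h2.symm, h1.symm⟩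
  loopless := by
    constructor
    intro u h
    rcases h with h | ⟨hne, _⟩
    · exact G.irrefl h
    · exact hne rfl

section

variable {V : Type*} [Fintype V] [DecidableEq V] (G : SimpleGraph V)

lemma mem_spread {B : Finset V} {v : V} :
    v ∈ spread G B ↔ v ∈ B ∨ ∃ u ∈ B, G.Adj u v := by
  simp [spread]

lemma subset_spread (B : Finset V) : B ⊆ spread G B :=
  fun _ hv => (mem_spread G).2 (Or.inl hv)

lemma spread_mono {B B' : Finset V} (h : B ⊆ B') : spread G B ⊆ spread G B' := by
  intro v hv
  rcases (mem_spread G).1 hv with hvB | ⟨u, hu, huv⟩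
  · exact (mem_spread G).2 (Or.inl (h hvB))
  · exact (mem_spread G).2 (Or.inr ⟨u, h hu, huv⟩)

@[simp]
lemma spread_empty : spread G (∅ : Finset V) = ∅ := by
  ext v
  simp [mem_spread]

lemma spread_square_subset (B : Finset V) : spread (square G) B ⊆ spread G (spread G B) := by
  intro v hv
  rcases (mem_spread (square G)).1 hv with hvB | ⟨u, hu, huv | ⟨_, w, huw, hwv⟩⟩
  · exact subset_spread G _ (subset_spread G _ hvB)
  · exact subset_spread G _ ((mem_spread G).2 (Or.inr ⟨u, hu, huv⟩))
  · exact (mem_spread G).2 (Or.inr ⟨w, (mem_spread G).2 (Or.inr ⟨u, hu, huw⟩), hwv⟩)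

lemma exists_notMem_insert_subset_insert {s : Finset V} (hs : s ≠ Finset.univ) (v : V) :
    ∃ u ∉ s, insert v s ⊆ insert u s := by
  by_cases hv : v ∈ s
  · obtain ⟨u, hu⟩ : ∃ u, u ∉ s := by simpa [Finset.eq_univ_iff_forall] using hs
    exact ⟨u, hu, by simp [Finset.insert_eq_of_mem hv, Finset.subset_insert]⟩
  · exact ⟨v, hv, subset_rfl⟩

variable {G} {turn : ℕ → Bool} {i k : ℕ} {B : Finset V}

lemma endBy_succ_of_spread_eq_univ (h : spread G B = Finset.univ) : EndBy G turn i B (k + 1) :=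
  Or.inr (Or.inl h)

lemma endBy_succ_of_forall
    (h : ∀ v ∉ spread G B, EndBy G turn (i + 1) (insert v (spread G B)) k) :
    EndBy G turn i B (k + 1) := by
  by_cases hs : spread G B = Finset.univ
  · exact endBy_succ_of_spread_eq_univ hs
  refine Or.inr (Or.inr ?_)
  split
  · obtain ⟨u, hu⟩ : ∃ u, u ∉ spread G B := by simpa [Finset.eq_univ_iff_forall] using hs
    exact ⟨u, hu, h u hu⟩
  · exact h

lemma exists_of_endBy_succ (ht : turn i = true) (hs : spread G B ≠ Finset.univ)
    (h : EndBy G turn i B (k + 1)) :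
    ∃ v ∉ spread G B, EndBy G turn (i + 1) (insert v (spread G B)) k := by
  rcases h with h | h | h
  · exact absurd (Finset.univ_subset_iff.1 (h ▸ subset_spread G B)) hs
  · exact absurd h hs
  · rwa [if_pos ht] at h

lemma endBy_of_card_le (h : Fintype.card V ≤ B.card + k) : EndBy G turn i B k := by
  induction k generalizing i B with
  | zero => exact Finset.eq_univ_of_card B (le_antisymm (Finset.card_le_univ B) h)
  | succ k ih =>
    refine endBy_succ_of_forall fun v hv => ih ?_
    have := Finset.card_le_card (subset_spread G B)
    rw [Finset.card_insert_of_notMem hv]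
    omega

variable (G turn i B) in
lemma endBy_sInf :
    EndBy G turn i B (sInf {k | EndBy G turn i B k}) :=
  Nat.sInf_mem ⟨Fintype.card V, endBy_of_card_le (by omega)⟩

lemma EndBy.mono {turn' : ℕ → Bool} (hturn : ∀ j, turn j = true → turn' j = true)
    {B' : Finset V} (hB : B ⊆ B') (h : EndBy G turn i B k) : EndBy G turn' i B' k := by
  induction k generalizing i B B' with
  | zero => exact Finset.univ_subset_iff.1 (h ▸ hB)
  | succ k ih =>
    rcases h with h | h | h
    · exact Or.inl (Finset.univ_subset_iff.1 (h ▸ hB))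
    · exact endBy_succ_of_spread_eq_univ (Finset.univ_subset_iff.1 (h ▸ spread_mono G hB))
    by_cases hs : spread G B' = Finset.univ
    · exact endBy_succ_of_spread_eq_univ hs
    split at h
    case isTrue ht =>
      obtain ⟨v, -, hv⟩ := h
      obtain ⟨u, hu, hsub⟩ := exists_notMem_insert_subset_insert hs v
      refine Or.inr (Or.inr ?_)
      rw [if_pos (hturn i ht)]
      exact ⟨u, hu, ih ((Finset.insert_subset_insert v (spread_mono G hB)).trans hsub) hv⟩
    case isFalse =>
      exact endBy_succ_of_forall fun u hu =>
        ih (Finset.insert_subset_insert u (spread_mono G hB))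
          (h u fun h' => hu (spread_mono G hB h'))

lemma endBy_succ_of_burner (ht : turn i = true) (v : V)
    (h : EndBy G turn (i + 1) (insert v (spread G B)) k) : EndBy G turn i B (k + 1) := by
  by_cases hs : spread G B = Finset.univ
  · exact endBy_succ_of_spread_eq_univ hs
  obtain ⟨u, hu, hsub⟩ := exists_notMem_insert_subset_insert hs v
  refine Or.inr (Or.inr ?_)
  rw [if_pos ht]
  exact ⟨u, hu, h.mono (fun _ => id) hsub⟩

lemma endBy_succ_of_copy {H : SimpleGraph V} {B' : Finset V} {j m : ℕ} (ht : turn i = true)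
    (hcover : spread H B ⊆ spread G B') (h : EndBy H (fun _ => true) j B (k + 1))
    (hcopy : ∀ v, EndBy H (fun _ => true) (j + 1) (insert v (spread H B)) k →
      EndBy G turn (i + 1) (insert v (spread G B')) m) :
    EndBy G turn i B' (m + 1) := by
  by_cases hs : spread H B = Finset.univ
  · exact endBy_succ_of_spread_eq_univ (Finset.univ_subset_iff.1 (hs ▸ hcover))
  obtain ⟨v, -, hv⟩ := exists_of_endBy_succ rfl hs h
  exact endBy_succ_of_burner ht v (hcopy v hv)

lemma endBy_of_endBy_square (k : ℕ) {B B' : Finset V} {i j : ℕ} (hi : i % 2 = 0)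
    (hcover : spread (square G) B ⊆ spread G B')
    (h : EndBy (square G) (fun _ => true) j B (k + 1)) :
    EndBy G (fun n => n % 2 == 0) i B' (2 * k + 1) := by
  induction k generalizing B B' i j with
  | zero =>
    refine endBy_succ_of_copy (by simp [hi]) hcover h fun v hv => ?_
    exact Finset.univ_subset_iff.1 (hv ▸ Finset.insert_subset_insert v hcover)
  | succ k ih =>
    refine endBy_succ_of_copy (by simp [hi]) hcover h fun v hv => ?_
    refine endBy_succ_of_forall fun w _ => ih (by omega) ?_ hv
    calc spread (square G) (insert v (spread (square G) B))
        ⊆ spread G (spread G (insert v (spread G B'))) :=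
          (spread_square_subset G _).trans
            (spread_mono G (spread_mono G (Finset.insert_subset_insert v hcover)))
      _ ⊆ _ := spread_mono G (Finset.subset_insert _ _)

end

theorem stmt0_general {V : Type*} [Fintype V] [DecidableEq V] (G : SimpleGraph V) :
    burn G ≤ bg G ∧ bg G ≤ min (cool G) (2 * burn (square G) - 1) := by
  refine ⟨Nat.sInf_le ((endBy_sInf G _ 0 ∅).mono (fun _ _ => rfl) subset_rfl), le_min ?_ ?_⟩
  · exact Nat.sInf_le ((endBy_sInf G _ 0 ∅).mono (by simp) subset_rfl)
  · have hsq : EndBy (square G) (fun _ => true) 0 ∅ (burn (square G)) := endBy_sInf _ _ _ _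
    cases hk : burn (square G) with
    | zero =>
      rw [hk] at hsq
      -- with no rounds left, `EndBy` only says `∅ = univ`, whatever the graph and the turns
      exact Nat.sInf_le hsq
    | succ k =>
      rw [hk] at hsq
      have hbg : bg G ≤ 2 * k + 1 :=
        Nat.sInf_le (endBy_of_endBy_square (B' := ∅) k rfl (by simp) hsq)
      omega

theorem stmt0 {V : Type*} [Fintype V] [DecidableEq V] (G : SimpleGraph V)
    (hG : G.Connected) :
    burn G ≤ bg G ∧ bg G ≤ min (cool G) (2 * burn (square G) - 1) :=
  stmt0_general G

end BurningGame
end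

section
/- For every connected graph G and every k ≥ 1, b_g(G) ≤ γ_k(G) + 3k and b_g'(G) ≤ γ_k(G) + 3k + 1. -/
namespace BurningGame

/-- The distance `k`-domination number: minimum size of a set `S` such that every
vertex is within distance `k` of some vertex of `S`. -/
noncomputable def kdomNum {V : Type*} [Fintype V] (G : SimpleGraph V) (k : ℕ) : ℕ :=
  sInf {m | ∃ S : Finset V, S.card = m ∧
    ∀ v : V, ∃ u ∈ S, ∃ p : G.Walk u v, p.length ≤ k}

/-! ### Auxiliary machinery -/

/-- `Near G u v r`: there is a walk from `u` to `v` of length at most `r`. -/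
def Near {V : Type*} (G : SimpleGraph V) (u v : V) (r : ℕ) : Prop :=
  ∃ p : G.Walk u v, p.length ≤ r

namespace Near

variable {V : Type*} {G : SimpleGraph V}

lemma mono {u v : V} {r r' : ℕ} (h : Near G u v r) (hr : r ≤ r') : Near G u v r' :=
  ⟨h.choose, h.choose_spec.trans hr⟩

lemma symm {u v : V} {r : ℕ} (h : Near G u v r) : Near G v u r := by
  obtain ⟨p, hp⟩ := h
  exact ⟨p.reverse, by simpa using hp⟩

lemma trans {u v w : V} {r s : ℕ} (h : Near G u v r) (h' : Near G v w s) :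
    Near G u w (r + s) := by
  obtain ⟨p, hp⟩ := h
  obtain ⟨q, hq⟩ := h'
  exact ⟨p.append q, by simp only [SimpleGraph.Walk.length_append]; omega⟩

lemma refl (u : V) (r : ℕ) : Near G u u r := ⟨SimpleGraph.Walk.nil, Nat.zero_le r⟩

end Near

section Master

variable {V : Type*} [Fintype V] [DecidableEq V] {G : SimpleGraph V}

lemma mem_spread_of_mem {B : Finset V} {u : V} (hu : u ∈ B) : u ∈ spread G B := by
  simp [spread]; exact Or.inl hu

lemma mem_spread_of_adj {B : Finset V} {u v : V} (hu : u ∈ B) (h : G.Adj u v) :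
    v ∈ spread G B := by
  simp [spread]; exact Or.inr ⟨u, hu, h⟩

lemma near_spread {B : Finset V} {u v : V} {r : ℕ} (hu : u ∈ B) (h : Near G u v (r + 1)) :
    ∃ w ∈ spread G B, Near G w v r := by
  obtain ⟨p, hp⟩ := h
  cases p with
  | nil => exact ⟨u, mem_spread_of_mem hu, SimpleGraph.Walk.nil, Nat.zero_le r⟩
  | cons h q =>
      refine ⟨_, mem_spread_of_adj hu h, q, ?_⟩
      simp [SimpleGraph.Walk.length_cons] at hp
      omega

lemma exists_not_mem_of_ne_univ {B : Finset V} (h : B ≠ Finset.univ) : ∃ v, v ∉ B := by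
  by_contra hc
  push_neg at hc
  exact h (Finset.eq_univ_iff_forall.mpr hc)

/-- The master strategy lemma: if there is a schedule `L` of seeds such that every
vertex of the graph is reachable from the `m`-th seed within the number of spreading
phases remaining after the seed gets burned on Burner's `(m+1)`-st turn (or is already
within distance `n` of the initial burned set), then Burner can finish within `n`
rounds, regardless of Staller's play. -/
lemma master (turn : ℕ → Bool) (halt : ∀ i, turn (i + 1) = !turn i) :
    ∀ (n : ℕ) (L : List V) (i : ℕ) (B : Finset V),
      (∀ v : V, (∃ u ∈ B, Near G u v n) ∨
        ∃ (m : ℕ) (h : m < L.length), ∃ p : G.Walk (L.get ⟨m, h⟩) v,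
          p.length + 2 * m + (if turn i then 1 else 2) ≤ n) →
      EndBy G turn i B n := by
  intro n
  induction n with
  | zero =>
      intro L i B hc
      show B = Finset.univ
      apply Finset.eq_univ_iff_forall.mpr
      intro v
      rcases hc v with ⟨u, hu, p, hp⟩ | ⟨m, hm, p, hp⟩
      · have : u = v := SimpleGraph.Walk.eq_of_length_eq_zero (Nat.le_zero.mp hp)
        exact this ▸ hu
      · split at hp <;> omega
  | succ n ih =>
      intro L i B hc
      show B = Finset.univ ∨ spread G B = Finset.univ ∨ _
      by_cases hU : spread G B = Finset.univ
      · exact Or.inr (Or.inl hU)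
      refine Or.inr (Or.inr ?_)
      cases hturn : turn i with
      | false =>
          rw [if_neg (by simp [hturn])]
          intro v' hv'
          apply ih L (i + 1) (insert v' (spread G B))
          intro v
          rcases hc v with ⟨u, hu, hnear⟩ | ⟨m, hm, p, hp⟩
          · obtain ⟨w, hw, hnw⟩ := near_spread hu hnear
            exact Or.inl ⟨w, Finset.mem_insert_of_mem hw, hnw⟩
          · refine Or.inr ⟨m, hm, p, ?_⟩
            rw [halt i, hturn] at *
            rw [hturn] at hp
            simp at hp ⊢
            omega
      | true =>
          rw [if_pos (by simp [hturn])]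
          rw [hturn] at hc
          cases L with
          | nil =>
              obtain ⟨v₀, hv₀⟩ := exists_not_mem_of_ne_univ hU
              refine ⟨v₀, hv₀, ih [] (i + 1) _ ?_⟩
              intro v
              rcases hc v with ⟨u, hu, hnear⟩ | ⟨m, hm, _⟩
              · obtain ⟨w, hw, hnw⟩ := near_spread hu hnear
                exact Or.inl ⟨w, Finset.mem_insert_of_mem hw, hnw⟩
              · simp at hm
          | cons s L' =>
              by_cases hs : s ∈ spread G B
              · obtain ⟨v₀, hv₀⟩ := exists_not_mem_of_ne_univ hU
                refine ⟨v₀, hv₀, ih L' (i + 1) _ ?_⟩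
                intro v
                rcases hc v with ⟨u, hu, hnear⟩ | ⟨m, hm, p, hp⟩
                · obtain ⟨w, hw, hnw⟩ := near_spread hu hnear
                  exact Or.inl ⟨w, Finset.mem_insert_of_mem hw, hnw⟩
                · cases m with
                  | zero =>
                      simp at hp
                      exact Or.inl ⟨s, Finset.mem_insert_of_mem hs, p, by omega⟩
                  | succ m' =>
                      refine Or.inr ⟨m', by simpa using Nat.lt_of_succ_lt_succ (by simpa using hm), ?_⟩
                      refine ⟨p, ?_⟩
                      rw [halt i, hturn]
                      simp at hp ⊢
                      omega
              · refine ⟨s, hs, ih L' (i + 1) _ ?_⟩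
                intro v
                rcases hc v with ⟨u, hu, hnear⟩ | ⟨m, hm, p, hp⟩
                · obtain ⟨w, hw, hnw⟩ := near_spread hu hnear
                  exact Or.inl ⟨w, Finset.mem_insert_of_mem hw, hnw⟩
                · cases m with
                  | zero =>
                      simp at hp
                      exact Or.inl ⟨s, Finset.mem_insert_self _ _, p, by omega⟩
                  | succ m' =>
                      refine Or.inr ⟨m', by simpa using Nat.lt_of_succ_lt_succ (by simpa using hm), ?_⟩
                      refine ⟨p, ?_⟩
                      rw [halt i, hturn]
                      simp at hp ⊢
                      omega

end Master

/-! ### Ore's lemma -/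

lemma exists_neighbor {α : Type*} [DecidableEq α] (S : Finset α) (R : α → α → Prop)
    (hsym : ∀ a b, R a b → R b a)
    (hconn : ∀ a ∈ S, ∀ b ∈ S,
      Relation.ReflTransGen (fun x y => x ∈ S ∧ y ∈ S ∧ x ≠ y ∧ R x y) a b)
    (h2 : 2 ≤ S.card) :
    ∀ u ∈ S, ∃ y ∈ S, y ≠ u ∧ R y u := by
  intro u hu
  obtain ⟨b, hb, hbu⟩ : ∃ b ∈ S, b ≠ u := by
    obtain ⟨a, ha, b, hb, hab⟩ := Finset.one_lt_card.mp h2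
    rcases eq_or_ne a u with rfl | h
    · exact ⟨b, hb, fun h' => hab h'.symm⟩
    · exact ⟨a, ha, h⟩
  have := hconn u hu b hb
  rcases (Relation.ReflTransGen.cases_head this) with rfl | ⟨c, ⟨_, hcS, hne, hR⟩, _⟩
  · exact absurd rfl hbu
  · exact ⟨c, hcS, fun h => hne h.symm, hsym _ _ hR⟩

/-- Ore-type lemma: a connected relational structure on a finset `S` with `|S| ≥ 2`
has a dominating set of size at most `|S| / 2`. -/
lemma ore {α : Type*} [DecidableEq α] (S : Finset α) (R : α → α → Prop)
    (hsym : ∀ a b, R a b → R b a)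
    (hconn : ∀ a ∈ S, ∀ b ∈ S,
      Relation.ReflTransGen (fun x y => x ∈ S ∧ y ∈ S ∧ x ≠ y ∧ R x y) a b)
    (h2 : 2 ≤ S.card) :
    ∃ D ⊆ S, 2 * D.card ≤ S.card ∧ ∀ u ∈ S, ∃ d ∈ D, d = u ∨ R d u := by
  classical
  have hnbr := exists_neighbor S R hsym hconn h2
  obtain ⟨D, ⟨hDS, hDdom⟩, hmin⟩ :=
    (wellFounded_lt (α := Finset α)).has_min
      {D | D ⊆ S ∧ ∀ u ∈ S, ∃ d ∈ D, d = u ∨ R d u}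
      ⟨S, subset_rfl, fun u hu => ⟨u, hu, Or.inl rfl⟩⟩
  have hout : ∀ u ∈ D, ∃ y ∈ S, y ∉ D ∧ R y u := by
    intro u huD
    have huS : u ∈ S := hDS huD
    obtain ⟨y₀, hy₀S, hy₀ne, hy₀R⟩ := hnbr u huS
    by_cases hy₀D : y₀ ∉ D
    · exact ⟨y₀, hy₀S, hy₀D, hy₀R⟩
    push_neg at hy₀D
    have hlt : D.erase u < D := Finset.erase_ssubset huD
    have hnotDom : ¬ ∀ u' ∈ S, ∃ d ∈ D.erase u, d = u' ∨ R d u' := by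
      intro hdom
      exact hmin (D.erase u) ⟨(Finset.erase_subset u D).trans hDS, hdom⟩ hlt
    push_neg at hnotDom
    obtain ⟨x, hxS, hx⟩ := hnotDom
    obtain ⟨d₀, hd₀D, hd₀⟩ := hDdom x hxS
    have hd₀u : d₀ = u := by
      by_contra h
      obtain ⟨h1, h2⟩ := hx d₀ (Finset.mem_erase.mpr ⟨h, hd₀D⟩)
      rcases hd₀ with h' | h' <;> [exact h1 h'; exact h2 h']
    subst hd₀u
    have hy₀x := hx y₀ (Finset.mem_erase.mpr ⟨hy₀ne, hy₀D⟩)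
    rcases hd₀ with rfl | hRux
    · exact absurd hy₀R hy₀x.2
    · have hxu : x ≠ d₀ := by
        rintro rfl
        exact hy₀x.2 hy₀R
      have hxD : x ∉ D := by
        intro hxD
        exact (hx x (Finset.mem_erase.mpr ⟨hxu, hxD⟩)).1 rfl
      exact ⟨x, hxS, hxD, hsym _ _ hRux⟩
  have hCdom : ∀ u ∈ S, ∃ d ∈ S \ D, d = u ∨ R d u := by
    intro u huS
    by_cases huD : u ∈ D
    · obtain ⟨y, hyS, hyD, hyR⟩ := hout u huD
      exact ⟨y, Finset.mem_sdiff.mpr ⟨hyS, hyD⟩, Or.inr hyR⟩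
    · exact ⟨u, Finset.mem_sdiff.mpr ⟨huS, huD⟩, Or.inl rfl⟩
  by_cases hsize : 2 * D.card ≤ S.card
  · exact ⟨D, hDS, hsize, hDdom⟩
  · refine ⟨S \ D, Finset.sdiff_subset, ?_, hCdom⟩
    have h1 : (S \ D).card = S.card - D.card := Finset.card_sdiff_of_subset hDS
    have h2' : D.card ≤ S.card := Finset.card_le_card hDS
    omega

/-! ### Connectivity of the auxiliary graph on a dominating set -/

lemma aux_connected {V : Type*} {G : SimpleGraph V} (hG : G.Connected) (S : Finset V) (k : ℕ)
    (σ : V → V) (hσS : ∀ v, σ v ∈ S) (hσn : ∀ v, Near G (σ v) v k) :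
    ∀ a ∈ S, ∀ b ∈ S, Relation.ReflTransGen
      (fun x y => x ∈ S ∧ y ∈ S ∧ x ≠ y ∧ Near G x y (2 * k + 1)) a b := by
  classical
  set step : V → V → Prop := fun x y => x ∈ S ∧ y ∈ S ∧ x ≠ y ∧ Near G x y (2 * k + 1)
    with hstep
  have hstep' : ∀ x y : V, x ∈ S → y ∈ S → Near G x y (2 * k + 1) →
      Relation.ReflTransGen step x y := by
    intro x y hx hy hn
    rcases eq_or_ne x y with rfl | hne
    · exact Relation.ReflTransGen.refl
    · exact Relation.ReflTransGen.single ⟨hx, hy, hne, hn⟩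
  have chain : ∀ {x y : V}, G.Walk x y → Relation.ReflTransGen step (σ x) (σ y) := by
    intro x y p
    induction p with
    | nil => exact Relation.ReflTransGen.refl
    | @cons a b c hadj q ih =>
        refine Relation.ReflTransGen.trans (hstep' _ _ (hσS _) (hσS _) ?_) ih
        have h1 : Near G (σ a) b (k + 1) :=
          (hσn a).trans ⟨SimpleGraph.Walk.cons hadj SimpleGraph.Walk.nil, by simp⟩
        have h2 : Near G (σ a) (σ b) ((k + 1) + k) := h1.trans (hσn b).symm
        exact h2.mono (by omega)
  intro a ha b hb
  obtain ⟨p⟩ := hG.preconnected a b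
  refine Relation.ReflTransGen.trans (hstep' a (σ a) ha (hσS a) ((hσn a).symm.mono (by omega)))
    (Relation.ReflTransGen.trans (chain p) (hstep' (σ b) b (hσS b) hb ((hσn b).mono (by omega))))

/-! ### The seed schedule -/

/-- Given a distance-`k`-dominating set `S` in a connected graph, there is a seed list `L`
such that every vertex can be reached from the `m`-th seed within
`S.card + 3k + 1 - (2m + 2)` steps. -/
lemma cover {V : Type*} [DecidableEq V] {G : SimpleGraph V} (hG : G.Connected)
    (S : Finset V) (k : ℕ)
    (hdom : ∀ v : V, ∃ u ∈ S, ∃ p : G.Walk u v, p.length ≤ k)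
    (hcard : 1 ≤ S.card) :
    ∃ L : List V, ∀ v : V, ∃ (m : ℕ) (h : m < L.length),
      ∃ p : G.Walk (L.get ⟨m, h⟩) v, p.length + 2 * m + 2 ≤ S.card + 3 * k + 1 := by
  classical
  have hdom' : ∀ v : V, ∃ u, u ∈ S ∧ Near G u v k := by
    intro v; obtain ⟨u, hu, p, hp⟩ := hdom v; exact ⟨u, hu, p, hp⟩
  choose σ hσS hσn using hdom'
  rcases eq_or_lt_of_le hcard with h1 | h2
  · -- S is a singleton
    obtain ⟨a, ha⟩ := Finset.card_eq_one.mp h1.symm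
    refine ⟨[a], fun v => ⟨0, by simp, ?_⟩⟩
    have hva : σ v = a := by have := hσS v; rw [ha] at this; simpa using this
    subst hva
    obtain ⟨p, hp⟩ := hσn v
    exact ⟨p, by omega⟩
  · -- |S| ≥ 2 : use Ore's lemma on the auxiliary graph
    obtain ⟨D, hDS, hDcard, hDdom⟩ := ore S (fun x y => Near G x y (2 * k + 1))
      (fun a b h => h.symm) (aux_connected hG S k σ hσS hσn) h2
    refine ⟨D.toList, fun v => ?_⟩
    obtain ⟨d, hdD, hd⟩ := hDdom (σ v) (hσS v)
    have hnear : Near G d v (3 * k + 1) := by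
      rcases hd with rfl | h
      · exact (hσn v).mono (by omega)
      · have := h.trans (hσn v)
        exact this.mono (by omega)
    have hmem : d ∈ D.toList := Finset.mem_toList.mpr hdD
    obtain ⟨⟨m, hm⟩, hget⟩ := List.mem_iff_get.mp hmem
    subst hget
    obtain ⟨p, hp⟩ := hnear
    refine ⟨m, hm, p, ?_⟩
    have hmM : m < D.card := by simpa [Finset.length_toList] using hm
    omega

/-! ### Main theorem -/

theorem stmt15 {V : Type*} [Fintype V] [DecidableEq V] (G : SimpleGraph V)
    (hG : G.Connected) (k : ℕ) (hk : 1 ≤ k) :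
    bg G ≤ kdomNum G k + 3 * k ∧ bg' G ≤ kdomNum G k + 3 * k + 1 := by
  classical
  have hV : Nonempty V := hG.nonempty
  -- obtain an optimal distance-k-dominating set
  have hne : {m | ∃ S : Finset V, S.card = m ∧
      ∀ v : V, ∃ u ∈ S, ∃ p : G.Walk u v, p.length ≤ k}.Nonempty :=
    ⟨(Finset.univ : Finset V).card, Finset.univ, rfl,
      fun v => ⟨v, Finset.mem_univ v, SimpleGraph.Walk.nil, Nat.zero_le k⟩⟩
  obtain ⟨S, hScard, hSdom⟩ := Nat.sInf_mem hne
  have hS1 : 1 ≤ S.card := by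
    obtain ⟨u, hu, _⟩ := hSdom (Classical.arbitrary V)
    exact Finset.card_pos.mpr ⟨u, hu⟩
  obtain ⟨L, hL⟩ := cover hG S k hSdom hS1
  have hkd : kdomNum G k = S.card := hScard.symm
  rw [hkd]
  constructor
  · -- Burner starts
    have halt : ∀ i : ℕ, ((fun i : ℕ => i % 2 == 0) (i + 1)) = !((fun i : ℕ => i % 2 == 0) i) := by
      intro i
      rcases Nat.mod_two_eq_zero_or_one i with h | h <;> simp [Nat.add_mod, h]
    have hend : EndBy G (fun i => i % 2 == 0) 0 ∅ (S.card + 3 * k) := by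
      apply master _ halt _ L 0 ∅
      intro v
      obtain ⟨m, hm, p, hp⟩ := hL v
      refine Or.inr ⟨m, hm, p, ?_⟩
      rw [if_pos (by norm_num)]
      omega
    have hbg : bg G = sInf {n | EndBy G (fun i => i % 2 == 0) 0 (∅ : Finset V) n} := rfl
    rw [hbg]
    exact Nat.sInf_le hend
  · -- Staller starts
    have halt : ∀ i : ℕ, ((fun i : ℕ => i % 2 == 1) (i + 1)) = !((fun i : ℕ => i % 2 == 1) i) := by
      intro i
      rcases Nat.mod_two_eq_zero_or_one i with h | h <;> simp [Nat.add_mod, h]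
    have hend : EndBy G (fun i => i % 2 == 1) 0 ∅ (S.card + 3 * k + 1) := by
      apply master _ halt _ L 0 ∅
      intro v
      obtain ⟨m, hm, p, hp⟩ := hL v
      refine Or.inr ⟨m, hm, p, ?_⟩
      rw [if_neg (by norm_num)]
      omega
    have hbg : bg' G = sInf {n | EndBy G (fun i => i % 2 == 1) 0 (∅ : Finset V) n} := rfl
    rw [hbg]
    exact Nat.sInf_le hend

end BurningGame
end
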